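/- For all integers k and l, the elements B_k satisfy [B_k, B_l] = (k − l)·B_{k+l} in 𝔤. -/

import Mathlib

/-!
Setup: `E ⊆ ℤ` with `E = -E`, `E ∩ Nℤ = ∅`, `E + N ⊆ E`; a ℂ-Lie algebra `𝔤`
with a central element `c`, principal Heisenberg generators `Λ_j` (`j ∈ E`) with
`[Λ_i, Λ_j] = i·δ_{i,-j}·c`, and Virasoro elements `d_k` with
`[d_k, Λ_j] = -(j/N)·Λ_{j+Nk}` and `[d_k, d_l] = (k-l)·d_{k+l}`.  Given finitely
supported scalars `(t_i)`, set
`B_k = d_k - (1/N)·Σ_{i∈E₊} i·t_i·Λ_{i+Nk} + (1/(2N))·(Σ_{i,j∈E₊, i+j=-Nk} i·j·t_i·t_j)·c`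
(the locally finite sums are formalized via `finsum`).
-/

noncomputable section

/-- The element
`B_k = d_k - (1/N)·Σ_{i∈E₊} i·t_i·Λ_{i+Nk} + (1/(2N))·(Σ_{i,j∈E₊, i+j=-Nk} i·j·t_i·t_j)·c`. -/
noncomputable def Bel (N : ℕ) (E : Set ℤ) {L : Type*} [LieRing L] [LieAlgebra ℂ L]
    (c : L) (Lam : ℤ → L) (d : ℤ → L) (t : ℤ → ℂ) (k : ℤ) : L :=
  d k - (N : ℂ)⁻¹ • (∑ᶠ i ∈ {i : ℤ | i ∈ E ∧ 0 < i}, ((i : ℂ) * t i) • Lam (i + (N : ℤ) * k))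
    + ((2 * (N : ℂ))⁻¹ *
        ∑ᶠ p ∈ {p : ℤ × ℤ | (p.1 ∈ E ∧ 0 < p.1) ∧ (p.2 ∈ E ∧ 0 < p.2)
            ∧ p.1 + p.2 = -((N : ℤ) * k)},
          (p.1 : ℂ) * (p.2 : ℂ) * t p.1 * t p.2) • c

/-!
Truncating to the finite set `S = E₊ ∩ supp t` gives `B_k = d_k - N⁻¹ A_k + (2N)⁻¹ q_k c` with
`A_k = Σ_{i ∈ S} i t_i Λ_{i+Nk}` and `q_k = Σ_{i, j ∈ S, i+j = -Nk} i j t_i t_j`. Since `c` is central,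
`[B_k, B_l] = [d_k, d_l] - N⁻¹ ([d_k, A_l] - [d_l, A_k]) + N⁻² [A_k, A_l]`.
In the middle term the weights `-(i+Nl)/N` and `-(i+Nk)/N` differ by `k - l`, giving
`(k - l) A_{k+l}`. In `[A_k, A_l]` a pair `(i, j)` with `i + j = -N(k+l)` carries the weight
`i + Nk`; symmetrising in `i ↔ j` replaces it by `((i + Nk) + (j + Nk))/2 = N(k - l)/2`.
-/

open Finset Function

theorem Finset.sum_sum_mul_add_of_symm {ι R : Type*} [CommSemiring R] (S : Finset ι)
    {g : ι → ι → R} (hg : ∀ i j, g i j = g j i) (a : ι → R) :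
    ∑ i ∈ S, ∑ j ∈ S, g i j * (a i + a j) = 2 * ∑ i ∈ S, ∑ j ∈ S, g i j * a i := by
  simp_rw [mul_add, sum_add_distrib, two_mul]
  congr 1
  rw [sum_comm]
  simp_rw [hg]

theorem lie_sub_smul_add_smul_of_central {R L : Type*} [CommRing R] [LieRing L]
    [LieAlgebra R L] {c : L} (hc : ∀ x : L, ⁅c, x⁆ = 0) (x y x' y' : L) (r s s' : R) :
    ⁅x - r • y + s • c, x' - r • y' + s' • c⁆
      = ⁅x, x'⁆ - r • (⁅x, y'⁆ - ⁅x', y⁆) + (r * r) • ⁅y, y'⁆ := by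
  have hc' : ∀ x : L, ⁅x, c⁆ = 0 := fun x => by rw [← lie_skew, hc, neg_zero]
  have hskew : ⁅y, x'⁆ = -⁅x', y⁆ := (lie_skew y x').symm
  simp only [lie_add, add_lie, lie_sub, sub_lie, lie_smul, smul_lie, hc, hc', hskew,
    smul_zero, add_zero]
  module

theorem Set.add_mul_mem_of_neg_mem_of_add_mem {E : Set ℤ} {N : ℤ}
    (hneg : ∀ j : ℤ, j ∈ E ↔ -j ∈ E) (hadd : ∀ j ∈ E, j + N ∈ E) {j : ℤ} (hj : j ∈ E)
    (m : ℤ) : j + N * m ∈ E := by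
  have hsub : ∀ j ∈ E, j - N ∈ E := fun j hj =>
    (hneg _).mpr (by rw [neg_sub, sub_eq_neg_add]; exact hadd _ ((hneg j).mp hj))
  induction m using Int.induction_on with
  | zero => simpa using hj
  | succ n ih => rw [mul_add_one, ← add_assoc]; exact hadd _ ih
  | pred n ih => rw [mul_sub_one, ← add_sub_assoc]; exact hsub _ ih

namespace Bel

variable {L : Type*} [LieRing L] [LieAlgebra ℂ L] (N : ℕ) (Lam : ℤ → L) (t : ℤ → ℂ)
  (S : Finset ℤ)

def lamSum (k : ℤ) : L := ∑ i ∈ S, ((i : ℂ) * t i) • Lam (i + N * k)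

def pairTerm (k i j : ℤ) : ℂ := if i + j = -(N * k) then (i : ℂ) * j * t i * t j else 0

def pairSum (k : ℤ) : ℂ := ∑ i ∈ S, ∑ j ∈ S, pairTerm N t k i j

theorem pairTerm_comm (k i j : ℤ) : pairTerm N t k i j = pairTerm N t k j i := by
  simp only [pairTerm, add_comm i j]
  split_ifs <;> ring

theorem sum_sum_pairTerm_mul (k l : ℤ) :
    ∑ i ∈ S, ∑ j ∈ S, pairTerm N t (k + l) i j * (i + N * k)
      = (N : ℂ) * ((k - l : ℤ) : ℂ) / 2 * pairSum N t S (k + l) := by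
  have hsym := sum_sum_mul_add_of_symm S (pairTerm_comm N t (k + l)) (fun i => i + N * k)
  have hpair : ∀ i j : ℤ, pairTerm N t (k + l) i j * ((i + N * k) + (j + N * k))
      = pairTerm N t (k + l) i j * (N * ((k - l : ℤ) : ℂ)) := by
    intro i j
    unfold pairTerm
    split_ifs with h
    · have h' : (i : ℂ) + j = -(N * (k + l)) := by exact_mod_cast h
      push_cast
      linear_combination (↑i * ↑j * t i * t j) * h'
    · simp
  have hfactor : ∑ i ∈ S, ∑ j ∈ S, pairTerm N t (k + l) i j * (N * ((k - l : ℤ) : ℂ))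
      = pairSum N t S (k + l) * (N * ((k - l : ℤ) : ℂ)) := by
    simp only [pairSum, sum_mul]
  simp only [hpair, hfactor] at hsym
  linear_combination -hsym / 2

theorem eq_lamSum_pairSum {E : Set ℤ} (c : L) (d : ℤ → L)
    (hS : ∀ i, i ∈ S ↔ (i ∈ E ∧ 0 < i) ∧ t i ≠ 0) (k : ℤ) :
    Bel N E c Lam d t k
      = d k - (N : ℂ)⁻¹ • lamSum N Lam t S k + ((2 * (N : ℂ))⁻¹ * pairSum N t S k) • c := by
  have hA : ∑ᶠ i ∈ {i : ℤ | i ∈ E ∧ 0 < i}, ((i : ℂ) * t i) • Lam (i + N * k)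
      = lamSum N Lam t S k := by
    refine finsum_mem_eq_sum_of_subset _ (fun i ⟨hi, hf⟩ => (hS i).mpr ⟨hi, ?_⟩)
      (fun i hi => ((hS i).mp hi).1)
    intro h
    simp [h] at hf
  have hq : ∑ᶠ p ∈ {p : ℤ × ℤ | (p.1 ∈ E ∧ 0 < p.1) ∧ (p.2 ∈ E ∧ 0 < p.2)
        ∧ p.1 + p.2 = -((N : ℤ) * k)}, (p.1 : ℂ) * (p.2 : ℂ) * t p.1 * t p.2
      = pairSum N t S k := by
    have hfilter : pairSum N t S k = ∑ p ∈ (S ×ˢ S).filter (fun p => p.1 + p.2 = -(N * k)),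
        (p.1 : ℂ) * p.2 * t p.1 * t p.2 := by
      rw [sum_filter, sum_product]; rfl
    rw [hfilter]
    refine finsum_mem_eq_sum_of_subset _ (fun p ⟨⟨h1, h2, hsum⟩, hf⟩ => ?_) (fun p hp => ?_)
    · have ⟨h1', h2'⟩ : t p.1 ≠ 0 ∧ t p.2 ≠ 0 := by
        simp only [mem_support, ne_eq, mul_eq_zero, not_or] at hf
        exact ⟨hf.1.2, hf.2⟩
      exact mem_coe.mpr <| mem_filter.mpr
        ⟨mem_product.mpr ⟨(hS _).mpr ⟨h1, h1'⟩, (hS _).mpr ⟨h2, h2'⟩⟩, hsum⟩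
    · simp only [coe_filter, mem_product, hS] at hp ⊢
      exact ⟨hp.1.1.1, hp.1.2.1, hp.2⟩
  rw [Bel, hA, hq]

variable {N Lam t S} {E : Set ℤ} (hE : ∀ j ∈ E, ∀ m : ℤ, j + N * m ∈ E) (hSE : ∀ i ∈ S, i ∈ E)
include hE hSE

theorem lie_lamSum_sub_lie_lamSum (hN : N ≠ 0) {d : ℤ → L}
    (hdLam : ∀ (k : ℤ), ∀ j ∈ E, ⁅d k, Lam j⁆ = (-(j : ℂ) / (N : ℂ)) • Lam (j + (N : ℤ) * k))
    (k l : ℤ) :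
    ⁅d k, lamSum N Lam t S l⁆ - ⁅d l, lamSum N Lam t S k⁆
      = ((k - l : ℤ) : ℂ) • lamSum N Lam t S (k + l) := by
  simp only [lamSum, lie_sum, lie_smul, smul_sum, ← sum_sub_distrib]
  refine sum_congr rfl fun i hi => ?_
  rw [hdLam _ _ (hE _ (hSE i hi) _), hdLam _ _ (hE _ (hSE i hi) _), add_assoc, add_assoc,
    ← mul_add, ← mul_add, add_comm l, smul_smul, smul_smul, smul_smul, ← sub_smul]
  congr 1
  field_simp
  push_cast
  ring

theorem lie_lamSum_lamSum {c : L}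
    (hLam : ∀ i ∈ E, ∀ j ∈ E, ⁅Lam i, Lam j⁆ = (if i + j = 0 then (i : ℂ) else 0) • c)
    (k l : ℤ) :
    ⁅lamSum N Lam t S k, lamSum N Lam t S l⁆
      = ((N : ℂ) * ((k - l : ℤ) : ℂ) / 2 * pairSum N t S (k + l)) • c := by
  have hterm : ∀ i ∈ S, ∀ j ∈ S,
      ⁅((i : ℂ) * t i) • Lam (i + N * k), ((j : ℂ) * t j) • Lam (j + N * l)⁆
        = (pairTerm N t (k + l) i j * (i + N * k)) • c := by
    intro i hi j hj
    rw [smul_lie, lie_smul, hLam _ (hE _ (hSE i hi) _) _ (hE _ (hSE j hj) _), smul_smul,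
      smul_smul]
    simp only [pairTerm, mul_add]
    congr 1
    split_ifs with h h' h'
    · push_cast; ring
    · omega
    · omega
    · simp
  rw [lamSum, lamSum, sum_lie_sum, ← sum_sum_pairTerm_mul, sum_smul]
  exact sum_congr rfl fun i hi => by rw [sum_smul]; exact sum_congr rfl (hterm i hi)

end Bel

theorem Bel_commutator_general
    (N : ℕ) (hN : 0 < N) (E : Set ℤ)
    (hEneg : ∀ j : ℤ, j ∈ E ↔ -j ∈ E)
    (hEadd : ∀ j ∈ E, j + (N : ℤ) ∈ E)
    {L : Type*} [LieRing L] [LieAlgebra ℂ L]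
    (c : L) (hc : ∀ x : L, ⁅c, x⁆ = 0)
    (Lam : ℤ → L) (d : ℤ → L)
    (hLam : ∀ i ∈ E, ∀ j ∈ E, ⁅Lam i, Lam j⁆ = (if i + j = 0 then (i : ℂ) else 0) • c)
    (hdLam : ∀ (k : ℤ), ∀ j ∈ E, ⁅d k, Lam j⁆ = (-(j : ℂ) / (N : ℂ)) • Lam (j + (N : ℤ) * k))
    (hdd : ∀ k l : ℤ, ⁅d k, d l⁆ = ((k - l : ℤ) : ℂ) • d (k + l))
    (t : ℤ → ℂ) (ht : (Function.support t).Finite)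
    (k l : ℤ) :
    ⁅Bel N E c Lam d t k, Bel N E c Lam d t l⁆
      = ((k - l : ℤ) : ℂ) • Bel N E c Lam d t (k + l) := by
  set S := (ht.inter_of_right {i : ℤ | i ∈ E ∧ 0 < i}).toFinset
  have hS : ∀ i, i ∈ S ↔ (i ∈ E ∧ 0 < i) ∧ t i ≠ 0 := by simp [S]
  have hSE : ∀ i ∈ S, i ∈ E := fun i hi => ((hS i).mp hi).1.1
  have hE : ∀ j ∈ E, ∀ m : ℤ, j + N * m ∈ E := fun j hj =>
    Set.add_mul_mem_of_neg_mem_of_add_mem hEneg hEadd hj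
  simp only [Bel.eq_lamSum_pairSum N Lam t S c d hS, lie_sub_smul_add_smul_of_central hc, hdd,
    Bel.lie_lamSum_sub_lie_lamSum hE hSE hN.ne' hdLam, Bel.lie_lamSum_lamSum hE hSE hLam,
    smul_smul]
  have hN' : (N : ℂ) ≠ 0 := Nat.cast_ne_zero.mpr hN.ne'
  have hscalar : (N : ℂ)⁻¹ * (N : ℂ)⁻¹ * (N * ((k - l : ℤ) : ℂ) / 2 * Bel.pairSum N t S (k + l))
      = ((k - l : ℤ) : ℂ) * ((2 * (N : ℂ))⁻¹ * Bel.pairSum N t S (k + l)) := by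
    field_simp
  rw [hscalar]
  module

/-- For all integers `k` and `l`, `[B_k, B_l] = (k-l)·B_{k+l}` in `𝔤`. -/
theorem Bel_commutator
    (N : ℕ) (hN : 0 < N) (E : Set ℤ)
    (hEneg : ∀ j : ℤ, j ∈ E ↔ -j ∈ E)
    (hEdvd : ∀ j ∈ E, ¬ ((N : ℤ) ∣ j))
    (hEadd : ∀ j ∈ E, j + (N : ℤ) ∈ E)
    {L : Type*} [LieRing L] [LieAlgebra ℂ L]
    (c : L) (hc : ∀ x : L, ⁅c, x⁆ = 0)
    (Lam : ℤ → L) (d : ℤ → L)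
    (hLam : ∀ i ∈ E, ∀ j ∈ E, ⁅Lam i, Lam j⁆ = (if i + j = 0 then (i : ℂ) else 0) • c)
    (hdLam : ∀ (k : ℤ), ∀ j ∈ E, ⁅d k, Lam j⁆ = (-(j : ℂ) / (N : ℂ)) • Lam (j + (N : ℤ) * k))
    (hdd : ∀ k l : ℤ, ⁅d k, d l⁆ = ((k - l : ℤ) : ℂ) • d (k + l))
    (t : ℤ → ℂ) (ht : (Function.support t).Finite)
    (k l : ℤ) :
    ⁅Bel N E c Lam d t k, Bel N E c Lam d t l⁆
      = ((k - l : ℤ) : ℂ) • Bel N E c Lam d t (k + l) :=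
  Bel_commutator_general N hN E hEneg hEadd c hc Lam d hLam hdLam hdd t ht k l
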